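/- arXiv:0905.2023 — 4 statements merged into one kernel-verified Lean document; each statement's English description precedes it below -/
import Mathlib

section
/- Let α, γ, N, μ_T, μ_I, μ_V be positive real numbers and set R₀ = γαN/(μ_T μ_V). Consider the real 3×3 matrix A = [[−μ_T, 0, −γα/μ_T], [0, −μ_I, γα/μ_T], [0, N μ_I, −μ_V]] (the linearization of the basic ODE model of virus dynamics at the non-infected steady state (α/μ_T, 0, 0)). Then every complex eigenvalue of A has negative real part if and only if R₀ < 1. -/
/-!
The first column of `A` is `-μT • e₀`, so its characteristic polynomial factors as
`(z + μT) * (z ^ 2 + (μI + μV) * z + c)` with `c = μI * μV * (1 - R₀)`. For a real quadratic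
`z ^ 2 + b * z + c` with `b > 0` (Routh–Hurwitz in degree two), all roots lie in the open left
half-plane iff `c > 0`: if `c > 0`, a non-real root has real part `-b / 2` and a real root cannot
be `≥ 0`; if `c ≤ 0`, then `(-b + √(b ^ 2 - 4 * c)) / 2 ≥ 0` is a root.
-/

theorem Matrix.det_algebraMap_sub_fin_three_of_col_zero {R : Type*} [CommRing R]
    (z a b p q r s : R) :
    (algebraMap R (Matrix (Fin 3) (Fin 3) R) z - !![a, 0, b; 0, p, q; 0, r, s]).det =
      (z - a) * ((z - p) * (z - s) - q * r) := by
  simp [Matrix.det_fin_three, Matrix.algebraMap_matrix_apply]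
  ring

theorem Matrix.mem_spectrum_iff_det_eq_zero {K n : Type*} [Field K] [Fintype n] [DecidableEq n]
    (M : Matrix n n K) (z : K) :
    z ∈ spectrum K M ↔ (algebraMap K (Matrix n n K) z - M).det = 0 := by
  rw [spectrum.mem_iff, Matrix.isUnit_iff_isUnit_det, isUnit_iff_ne_zero, not_ne_iff]

theorem exists_nonneg_root_of_nonpos {b c : ℝ} (hc : c ≤ 0) :
    ∃ x : ℝ, 0 ≤ x ∧ x ^ 2 + b * x + c = 0 := by
  have hd : 0 ≤ b ^ 2 - 4 * c := by nlinarith [sq_nonneg b]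
  have hb : b ≤ √(b ^ 2 - 4 * c) :=
    (le_abs_self b).trans (Real.abs_le_sqrt (by linarith))
  refine ⟨(-b + √(b ^ 2 - 4 * c)) / 2, by linarith, ?_⟩
  linear_combination Real.sq_sqrt hd / 4

theorem Complex.re_neg_of_sq_add_mul_add_eq_zero {b c : ℝ} (hb : 0 < b) (hc : 0 < c) {z : ℂ}
    (hz : z ^ 2 + b * z + c = 0) : z.re < 0 := by
  have hre : z.re ^ 2 - z.im ^ 2 + b * z.re + c = 0 := by
    simpa [sq] using congrArg Complex.re hz
  have him : z.im * (2 * z.re + b) = 0 := by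
    have h := congrArg Complex.im hz
    simp only [sq, Complex.add_im, Complex.mul_im, Complex.ofReal_re, Complex.ofReal_im,
      Complex.zero_im] at h
    linear_combination h
  by_contra! hz_re
  rcases mul_eq_zero.mp him with h | h
  · rw [h] at hre; nlinarith
  · linarith

theorem forall_sq_add_mul_add_eq_zero_re_neg_iff {b c : ℝ} (hb : 0 < b) :
    (∀ z : ℂ, z ^ 2 + b * z + c = 0 → z.re < 0) ↔ 0 < c := by
  refine ⟨fun h => ?_, fun hc z => Complex.re_neg_of_sq_add_mul_add_eq_zero hb hc⟩
  by_contra! hc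
  obtain ⟨x, hx, hroot⟩ := exists_nonneg_root_of_nonpos (b := b) hc
  have hx_neg : x < 0 := by simpa using h x (by exact_mod_cast hroot)
  linarith

theorem stmt_1_general (α γ N μT μI μV : ℝ)
    (hμT : 0 < μT) (hμI : 0 < μI) (hμV : 0 < μV)
    (A : Matrix (Fin 3) (Fin 3) ℝ)
    (hA : A = !![-μT, 0, -γ * α / μT;
                 0, -μI, γ * α / μT;
                 0, N * μI, -μV]) :
    (∀ z ∈ spectrum ℂ (A.map (algebraMap ℝ ℂ)), z.re < 0) ↔
      γ * α * N / (μT * μV) < 1 := by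
  set c : ℝ := μI * μV - γ * α / μT * (N * μI)
  have hA_map : A.map (algebraMap ℝ ℂ) =
      !![((-μT : ℝ) : ℂ), 0, ((-γ * α / μT : ℝ) : ℂ); 0, ((-μI : ℝ) : ℂ), ((γ * α / μT : ℝ) : ℂ);
        0, ((N * μI : ℝ) : ℂ), ((-μV : ℝ) : ℂ)] := by
    subst hA; ext i j; fin_cases i <;> fin_cases j <;> simp
  have hspec (z : ℂ) : z ∈ spectrum ℂ (A.map (algebraMap ℝ ℂ)) ↔
      z = -μT ∨ z ^ 2 + (μI + μV : ℝ) * z + c = 0 := by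
    rw [Matrix.mem_spectrum_iff_det_eq_zero, hA_map,
      Matrix.det_algebraMap_sub_fin_three_of_col_zero, mul_eq_zero, sub_eq_zero]
    simp only [c]
    push_cast
    ring_nf
  have hR₀ : γ * α * N / (μT * μV) < 1 ↔ 0 < c := by
    rw [div_lt_one (by positivity), sub_pos, div_mul_eq_mul_div, div_lt_iff₀ hμT]
    constructor <;> intro h <;> nlinarith
  simp only [hspec, or_imp, forall_and, forall_eq, Complex.neg_re, Complex.ofReal_re,
    neg_lt_zero, hμT, true_and, hR₀]
  exact forall_sq_add_mul_add_eq_zero_re_neg_iff (by positivity)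

/-- The linearization of the basic ODE model at the non-infected
steady state has all its (complex) eigenvalues with negative real part
if and only if the basic reproductive ratio `R₀ = γαN/(μ_T μ_V)` is `< 1`. -/
theorem stmt_1 (α γ N μT μI μV : ℝ)
    (hα : 0 < α) (hγ : 0 < γ) (hN : 0 < N)
    (hμT : 0 < μT) (hμI : 0 < μI) (hμV : 0 < μV)
    (A : Matrix (Fin 3) (Fin 3) ℝ)
    (hA : A = !![-μT, 0, -γ * α / μT;
                 0, -μI, γ * α / μT;
                 0, N * μI, -μV]) :
    (∀ z ∈ spectrum ℂ (A.map (algebraMap ℝ ℂ)), z.re < 0) ↔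
      γ * α * N / (μT * μV) < 1 :=
  stmt_1_general α γ N μT μI μV hμT hμI hμV A hA
end

section
/- Fix positive reals d_V, γ, μ_T, μ_V and ℓ > 0, and let R₀ : ℝ² → ℝ be continuous, ℓ-periodic and everywhere positive. If V₁ and V₂ are two nonnegative, ℓ-periodic, twice continuously differentiable solutions of the steady-state virus equation d_V ΔV − μ_V V + μ_T μ_V R₀ V/(γV + μ_T) = 0 on ℝ², neither of which is identically zero, then V₁ = V₂. In other words, the equation admits at most one nontrivial nonnegative ℓ-periodic classical solution. -/
/-!
Positivity comes from the strong minimum principle. Suppose a nonnegative `C²` function with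
`ΔV ≤ c V` (`c ≥ 0`) vanishes somewhere but not everywhere, and let `z` be a zero nearest to a
point `y` with `V y > 0`, `ρ = |z - y|²`. On the annulus `ρ / 4 ≤ |x - y|² ≤ ρ` the Hopf barrier
`h = exp (-α |x - y|²) - exp (-α ρ)` satisfies `Δh > c h` for large `α`, so the weak minimum
principle gives `V ≥ m h` there, `m > 0` being the minimum of `V` on the inner disc. Hence `V`
grows linearly from `z` towards `y`, contradicting `∇V z = 0`.

For two positive periodic solutions the ratio `V₂ / V₁` attains its minimum `θ`. If `θ < 1`, then
`w = V₂ - θ V₁ ≥ 0` vanishes at the minimum point, where `Δw ≥ 0`; but the equation gives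
`d_V Δw = F(θ V₁) - θ F(V₁) < 0` for the reaction term `F`, because `s ↦ s / (γ s + μT)` is
strictly subhomogeneous. So `V₁ ≤ V₂`, and symmetrically `V₂ ≤ V₁`.
-/

/-- The Laplacian of a function on `ℝ²`. -/
noncomputable def lap (V : ℝ × ℝ → ℝ) (x : ℝ × ℝ) : ℝ :=
  deriv (fun s : ℝ => deriv (fun t : ℝ => V (t, x.2)) s) x.1 +
  deriv (fun s : ℝ => deriv (fun t : ℝ => V (x.1, t)) s) x.2

/-- `ℓ`-periodicity in each variable of a function on `ℝ²`. -/
def IsPer (ℓ : ℝ) (f : ℝ × ℝ → ℝ) : Prop :=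
  ∀ x : ℝ × ℝ, f (x.1 + ℓ, x.2) = f x ∧ f (x.1, x.2 + ℓ) = f x

open Filter Topology Set

theorem IsLocalMin.deriv_deriv_nonneg {f : ℝ → ℝ} {a : ℝ} (h : IsLocalMin f a)
    (hc : ContinuousAt f a) : 0 ≤ deriv (deriv f) a := by
  by_contra! hneg
  have hconst : f =ᶠ[𝓝 a] fun _ => f a := by
    filter_upwards [h, isLocalMax_of_deriv_deriv_neg hneg h.deriv_eq_zero hc] with x h₁ h₂
    exact le_antisymm h₂ h₁
  have : deriv (deriv f) a = 0 := by simp [hconst.deriv.deriv_eq]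
  linarith

theorem lap_nonneg_of_isLocalMin {w : ℝ × ℝ → ℝ} {p : ℝ × ℝ} (h : IsLocalMin w p)
    (hw : ContinuousAt w p) : 0 ≤ lap w p := by
  have h₁ : ContinuousAt (fun t : ℝ => (t, p.2)) p.1 := by fun_prop
  have h₂ : ContinuousAt (fun t : ℝ => (p.1, t)) p.2 := by fun_prop
  exact add_nonneg (IsLocalMin.deriv_deriv_nonneg (h.comp_continuous h₁) (hw.comp h₁))
    (IsLocalMin.deriv_deriv_nonneg (h.comp_continuous h₂) (hw.comp h₂))

theorem deriv_deriv_sub_const_mul {f g : ℝ → ℝ} (hf : ContDiff ℝ 2 f) (hg : ContDiff ℝ 2 g)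
    (c a : ℝ) :
    deriv (deriv fun t => f t - c * g t) a = deriv (deriv f) a - c * deriv (deriv g) a := by
  have hderiv : deriv (fun t => f t - c * g t) = fun t => deriv f t - c * deriv g t := by
    funext t
    have hg' := hg.differentiable two_ne_zero t
    rw [deriv_fun_sub (hf.differentiable two_ne_zero t) (hg'.const_mul c), deriv_const_mul _ hg']
  have hg'' := hg.differentiable_deriv_two a
  rw [hderiv, deriv_fun_sub (hf.differentiable_deriv_two a) (hg''.const_mul c),
    deriv_const_mul _ hg'']

theorem lap_sub_const_mul {u v : ℝ × ℝ → ℝ} (hu : ContDiff ℝ 2 u) (hv : ContDiff ℝ 2 v)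
    (c : ℝ) (p : ℝ × ℝ) : lap (fun x => u x - c * v x) p = lap u p - c * lap v p := by
  have slice₁ {w : ℝ × ℝ → ℝ} (hw : ContDiff ℝ 2 w) : ContDiff ℝ 2 fun t => w (t, p.2) :=
    hw.comp (by fun_prop)
  have slice₂ {w : ℝ × ℝ → ℝ} (hw : ContDiff ℝ 2 w) : ContDiff ℝ 2 fun t => w (p.1, t) :=
    hw.comp (by fun_prop)
  simp only [lap]
  rw [deriv_deriv_sub_const_mul (slice₁ hu) (slice₁ hv),
    deriv_deriv_sub_const_mul (slice₂ hu) (slice₂ hv)]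
  ring

/-- Squared Euclidean distance, written out because the metric of `ℝ × ℝ` is the sup metric. -/
def sqDist (y x : ℝ × ℝ) : ℝ := (x.1 - y.1) ^ 2 + (x.2 - y.2) ^ 2

theorem sqDist_nonneg (y x : ℝ × ℝ) : 0 ≤ sqDist y x := by
  unfold sqDist; positivity

theorem sqDist_pos {y x : ℝ × ℝ} (h : y ≠ x) : 0 < sqDist y x := by
  unfold sqDist
  by_contra! hle
  exact h (Prod.ext (by nlinarith [sq_nonneg (x.1 - y.1), sq_nonneg (x.2 - y.2)])
    (by nlinarith [sq_nonneg (x.1 - y.1), sq_nonneg (x.2 - y.2)]))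

@[fun_prop]
theorem continuous_sqDist (y : ℝ × ℝ) : Continuous (sqDist y) := by
  unfold sqDist; fun_prop

theorem sqDist_add_smul_sub (y z : ℝ × ℝ) (t : ℝ) :
    sqDist y (z + t • (y - z)) = (1 - t) ^ 2 * sqDist y z := by
  simp only [sqDist, Prod.fst_add, Prod.snd_add, Prod.smul_fst, Prod.smul_snd, Prod.fst_sub,
    Prod.snd_sub, smul_eq_mul]
  ring

theorem isCompact_sqDist_le (y : ℝ × ℝ) (r : ℝ) : IsCompact {x | sqDist y x ≤ r} := by
  refine Metric.isCompact_of_isClosed_isBounded (isClosed_le (by fun_prop) (by fun_prop))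
    ((Metric.isBounded_closedBall (x := y) (r := r + 1)).subset fun x hx => ?_)
  have h₁ := sqDist_nonneg y x
  have habs (a : ℝ) : |a| ≤ a ^ 2 + 1 := by nlinarith [sq_abs a, abs_nonneg a]
  simp only [mem_ofPred_eq, sqDist] at hx
  simp only [Metric.mem_closedBall, Prod.dist_eq, Real.dist_eq, sup_le_iff]
  constructor <;> nlinarith [habs (x.1 - y.1), habs (x.2 - y.2), sq_nonneg (x.1 - y.1),
    sq_nonneg (x.2 - y.2)]

theorem IsClosed.exists_sqDist_le {s : Set (ℝ × ℝ)} (hs : IsClosed s) (hne : s.Nonempty)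
    (y : ℝ × ℝ) : ∃ z ∈ s, ∀ x ∈ s, sqDist y z ≤ sqDist y x := by
  obtain ⟨x₀, hx₀⟩ := hne
  obtain ⟨z, hz, hmin⟩ := ((isCompact_sqDist_le y (sqDist y x₀)).inter_left hs).exists_isMinOn
    ⟨x₀, hx₀, le_refl (sqDist y x₀)⟩ (continuous_sqDist y).continuousOn
  refine ⟨z, hz.1, fun x hx => ?_⟩
  rcases le_total (sqDist y x) (sqDist y x₀) with h | h
  · exact hmin ⟨hx, h⟩
  · exact (hmin ⟨hx₀, le_refl (sqDist y x₀)⟩).trans h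

/-- The barrier of Hopf's boundary point lemma. -/
noncomputable def gaussBarrier (y : ℝ × ℝ) (α ρ : ℝ) (x : ℝ × ℝ) : ℝ :=
  Real.exp (-α * sqDist y x) - Real.exp (-α * ρ)

theorem contDiff_gaussBarrier (y : ℝ × ℝ) (α ρ : ℝ) : ContDiff ℝ 2 (gaussBarrier y α ρ) := by
  unfold gaussBarrier sqDist; fun_prop

theorem deriv_deriv_exp_sq (α c k C s : ℝ) :
    deriv (deriv fun t => Real.exp (-α * ((t - c) ^ 2 + k)) - C) s =
      Real.exp (-α * ((s - c) ^ 2 + k)) * (4 * α ^ 2 * (s - c) ^ 2 - 2 * α) := by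
  have hinner (t : ℝ) : HasDerivAt (fun t => -α * ((t - c) ^ 2 + k)) (-α * (2 * (t - c))) t := by
    simpa using ((((hasDerivAt_id t).sub_const c).pow 2).add_const k).const_mul (-α)
  have hfirst : deriv (fun t => Real.exp (-α * ((t - c) ^ 2 + k)) - C) =
      fun t => Real.exp (-α * ((t - c) ^ 2 + k)) * (-α * (2 * (t - c))) := by
    funext t
    exact ((hinner t).exp.sub_const C).deriv
  have hlin : HasDerivAt (fun t => -α * (2 * (t - c))) (-α * 2) s := by
    simpa using (((hasDerivAt_id s).sub_const c).const_mul 2).const_mul (-α)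
  rw [hfirst, ((hinner s).exp.fun_mul hlin).deriv]
  ring

theorem lap_gaussBarrier (y : ℝ × ℝ) (α ρ : ℝ) (p : ℝ × ℝ) :
    lap (gaussBarrier y α ρ) p =
      Real.exp (-α * sqDist y p) * (4 * α ^ 2 * sqDist y p - 4 * α) := by
  have h₂ := deriv_deriv_exp_sq α y.2 ((p.1 - y.1) ^ 2) (Real.exp (-α * ρ)) p.2
  simp only [add_comm _ ((p.1 - y.1) ^ 2)] at h₂
  simp only [lap, gaussBarrier, sqDist, deriv_deriv_exp_sq, h₂]
  ring

theorem gaussBarrier_le_exp (y : ℝ × ℝ) (α ρ : ℝ) (x : ℝ × ℝ) :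
    gaussBarrier y α ρ x ≤ Real.exp (-α * sqDist y x) := by
  unfold gaussBarrier; linarith [Real.exp_pos (-α * ρ)]

theorem gaussBarrier_of_sqDist_eq {y x : ℝ × ℝ} {α ρ : ℝ} (h : sqDist y x = ρ) :
    gaussBarrier y α ρ x = 0 := by
  simp [gaussBarrier, h]

theorem hasDerivAt_gaussBarrier_segment (y z : ℝ × ℝ) (α : ℝ) :
    HasDerivAt (fun t : ℝ => gaussBarrier y α (sqDist y z) (z + t • (y - z)))
      (2 * α * sqDist y z * Real.exp (-α * sqDist y z)) 0 := by
  simp only [gaussBarrier, sqDist_add_smul_sub]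
  have := (((((hasDerivAt_id' (0 : ℝ)).const_sub 1).fun_pow 2).mul_const (sqDist y z)).const_mul
    (-α)).exp.sub_const (Real.exp (-α * sqDist y z))
  exact this.congr_deriv (by norm_num; ring)

theorem HasDerivAt.nonneg_of_forall_Icc_le {φ : ℝ → ℝ} {φ' a b : ℝ} (hφ : HasDerivAt φ φ' a)
    (hab : a < b) (hmin : ∀ t ∈ Icc a b, φ a ≤ φ t) : 0 ≤ φ' := by
  have := IsMinOn.localize (f := φ) hmin |>.hasFDerivWithinAt_nonneg
    hφ.hasFDerivAt.hasFDerivWithinAt (sub_mem_posTangentConeAt_of_segment_subset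
      (segment_subset_Icc hab.le))
  rw [ContinuousLinearMap.toSpanSingleton_apply, smul_eq_mul] at this
  exact nonneg_of_mul_nonneg_right this (sub_pos.2 hab)

section MinimumPrinciple

variable {V : ℝ × ℝ → ℝ} {c : ℝ}

theorem mul_gaussBarrier_le (hV : ContDiff ℝ 2 V) (hc : 0 ≤ c) (hnn : ∀ x, 0 ≤ V x)
    (hlap : ∀ x, lap V x ≤ c * V x) {y : ℝ × ℝ} {α ρ m : ℝ} (hα : 0 ≤ α)
    (hαρ : c < α ^ 2 * ρ - 4 * α) (hm : 0 < m) (hmV : ∀ x, sqDist y x = ρ / 4 → m ≤ V x) :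
    ∀ x, sqDist y x ∈ Icc (ρ / 4) ρ → m * gaussBarrier y α ρ x ≤ V x := by
  set w := fun x => V x - m * gaussBarrier y α ρ x with hw_def
  set K := sqDist y ⁻¹' Icc (ρ / 4) ρ
  have hK : IsCompact K := (isCompact_sqDist_le y ρ).of_isClosed_subset
    (isClosed_Icc.preimage (continuous_sqDist y)) fun x hx => hx.2
  have hw : ContDiff ℝ 2 w := hV.sub (contDiff_const.mul (contDiff_gaussBarrier y α ρ))
  by_contra! ⟨x, hxK, hx⟩
  obtain ⟨p, hpK, hpmin⟩ := hK.exists_isMinOn ⟨x, hxK⟩ hw.continuous.continuousOn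
  have hwp : w p < 0 := (hpmin hxK).trans_lt (by simp only [w]; linarith)
  have hinner : sqDist y p ≠ ρ / 4 := fun h => by
    have hg : gaussBarrier y α ρ p ≤ 1 := (gaussBarrier_le_exp y α ρ p).trans
      (Real.exp_le_one_iff.2 (by nlinarith [sqDist_nonneg y p]))
    have := hmV p h
    simp only [w] at hwp
    nlinarith
  have houter : sqDist y p ≠ ρ := fun h => by
    simp only [w, gaussBarrier_of_sqDist_eq h] at hwp
    linarith [hnn p]
  have hinterior : K ∈ 𝓝 p := mem_of_superset
    ((isOpen_Ioo.preimage (continuous_sqDist y)).mem_nhds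
      ⟨hpK.1.lt_of_ne' hinner, hpK.2.lt_of_ne houter⟩) (preimage_mono Ioo_subset_Icc_self)
  have hlapw := lap_nonneg_of_isLocalMin (hpmin.isLocalMin hinterior) hw.continuous.continuousAt
  rw [hw_def, lap_sub_const_mul hV (contDiff_gaussBarrier y α ρ), lap_gaussBarrier] at hlapw
  have hr : c < 4 * α ^ 2 * sqDist y p - 4 * α := by
    nlinarith [hpK.1, sq_nonneg α]
  have hE := Real.exp_pos (-α * sqDist y p)
  have hg := gaussBarrier_le_exp y α ρ p
  nlinarith [hlap p, mul_pos (mul_pos hm hE) (sub_pos.2 hr),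
    mul_nonpos_of_nonneg_of_nonpos hc hwp.le, mul_nonneg (mul_nonneg hc hm.le) (sub_nonneg.2 hg)]

theorem pos_of_pos_on_ball (hV : ContDiff ℝ 2 V) (hc : 0 ≤ c) (hnn : ∀ x, 0 ≤ V x)
    (hlap : ∀ x, lap V x ≤ c * V x) {y z : ℝ × ℝ} (hyz : y ≠ z)
    (hball : ∀ x, sqDist y x < sqDist y z → 0 < V x) : 0 < V z := by
  set ρ := sqDist y z
  have hρ : 0 < ρ := sqDist_pos hyz
  obtain ⟨q, hq, hqmin⟩ := (isCompact_sqDist_le y (ρ / 4)).exists_isMinOn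
    ⟨y, show sqDist y y ≤ ρ / 4 by simp [sqDist]; positivity⟩ hV.continuous.continuousOn
  have hm : 0 < V q := hball q (by linarith [show sqDist y q ≤ ρ / 4 from hq])
  -- `c < α² ρ - 4α` makes `Δh > c h` on the annulus `ρ / 4 ≤ sqDist y x ≤ ρ`.
  set α := (c + 4) / ρ + 1
  have hα : 1 ≤ α := by simp only [α]; linarith [div_nonneg (by linarith : 0 ≤ c + 4) hρ.le]
  have hαρ : c < α ^ 2 * ρ - 4 * α := by
    have : α * ρ = c + 4 + ρ := by simp only [α]; field_simp
    nlinarith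
  have hcomp := mul_gaussBarrier_le hV hc hnn hlap (by linarith) hαρ hm
    fun x hx => hqmin (le_of_eq hx)
  refine (hnn z).lt_of_ne' fun hz => ?_
  have hVmin : IsLocalMin V z := Eventually.of_forall fun x => hz ▸ hnn x
  have hVz : HasFDerivAt V (0 : ℝ × ℝ →L[ℝ] ℝ) z := by
    simpa [hVmin.fderiv_eq_zero] using (hV.differentiable two_ne_zero z).hasFDerivAt
  have hline : HasDerivAt (fun t : ℝ => z + t • (y - z)) (y - z) 0 := by
    simpa using ((hasDerivAt_id (0 : ℝ)).smul_const (y - z)).const_add z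
  set φ : ℝ → ℝ := fun t => V (z + t • (y - z)) - V q * gaussBarrier y α ρ (z + t • (y - z))
  have hφ : HasDerivAt φ (-(V q * (2 * α * ρ * Real.exp (-α * ρ)))) 0 :=
    ((hVz.comp_hasDerivAt_of_eq 0 hline (by simp)).fun_sub
      ((hasDerivAt_gaussBarrier_segment y z α).const_mul (V q))).congr_deriv (by simp [ρ])
  have hφ₀ : φ 0 = 0 := by
    have : gaussBarrier y α ρ z = 0 := gaussBarrier_of_sqDist_eq rfl
    simp [φ, hz, this]
  have := hφ.nonneg_of_forall_Icc_le (by norm_num : (0 : ℝ) < 1 / 2) fun t ht => by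
    have hseg : sqDist y (z + t • (y - z)) = (1 - t) ^ 2 * ρ := sqDist_add_smul_sub y z t
    obtain ⟨ht₀, ht₁⟩ := ht
    have := hcomp (z + t • (y - z)) ⟨by
      rw [hseg]; nlinarith [mul_nonneg (mul_nonneg (by linarith : 0 ≤ 1 / 2 - t)
        (by linarith : 0 ≤ 3 / 2 - t)) hρ.le], by
      rw [hseg]; nlinarith [mul_nonneg (mul_nonneg ht₀ (by linarith : 0 ≤ 2 - t)) hρ.le]⟩
    simp only [hφ₀, φ]
    linarith
  have : 0 < V q * (2 * α * ρ * Real.exp (-α * ρ)) := by positivity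
  linarith

theorem pos_of_lap_le_mul (hV : ContDiff ℝ 2 V) (hc : 0 ≤ c) (hnn : ∀ x, 0 ≤ V x)
    (hne : ¬ ∀ x, V x = 0) (hlap : ∀ x, lap V x ≤ c * V x) (x : ℝ × ℝ) : 0 < V x := by
  refine (hnn x).lt_of_ne' fun hx => ?_
  obtain ⟨y, hy⟩ := not_forall.1 hne
  obtain ⟨z, hz, hnearest⟩ := (isClosed_eq hV.continuous continuous_const).exists_sqDist_le
    ⟨x, hx⟩ y
  have hball (x : ℝ × ℝ) (hx : sqDist y x < sqDist y z) : 0 < V x :=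
    (hnn x).lt_of_ne' fun h => (hnearest x h).not_gt hx
  exact (pos_of_pos_on_ball hV hc hnn hlap (by rintro rfl; exact hy hz) hball).ne' hz

end MinimumPrinciple

namespace IsPer

variable {ℓ : ℝ} {f g : ℝ × ℝ → ℝ}

theorem div (hf : IsPer ℓ f) (hg : IsPer ℓ g) : IsPer ℓ fun x => f x / g x := fun x => by
  simp only [(hf x).1, (hf x).2, (hg x).1, (hg x).2, and_self]

theorem exists_mem_square (hf : IsPer ℓ f) (hℓ : 0 < ℓ) (x : ℝ × ℝ) :
    ∃ x' ∈ Icc 0 ℓ ×ˢ Icc 0 ℓ, f x' = f x := by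
  obtain ⟨s, hs, hfs⟩ := Function.Periodic.exists_mem_Ico₀ (c := ℓ) (f := fun s => f (s, x.2))
    (fun s => (hf (s, x.2)).1) hℓ x.1
  obtain ⟨t, ht, hft⟩ := Function.Periodic.exists_mem_Ico₀ (c := ℓ) (f := fun t => f (s, t))
    (fun t => (hf (s, t)).2) hℓ x.2
  exact ⟨(s, t), ⟨Ico_subset_Icc_self hs, Ico_subset_Icc_self ht⟩, (hfs.trans hft).symm⟩

theorem exists_forall_le (hf : IsPer ℓ f) (hℓ : 0 < ℓ) (hcont : Continuous f) :
    ∃ x₀, ∀ x, f x₀ ≤ f x := by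
  obtain ⟨x₀, -, hmin⟩ := (isCompact_Icc.prod isCompact_Icc).exists_isMinOn
    ⟨(0, 0), ⟨left_mem_Icc.2 hℓ.le, left_mem_Icc.2 hℓ.le⟩⟩ hcont.continuousOn
  refine ⟨x₀, fun x => ?_⟩
  obtain ⟨x', hx', hfx'⟩ := hf.exists_mem_square hℓ x
  exact hfx' ▸ hmin hx'

end IsPer

theorem le_of_lap_eq_of_isPer {d ℓ : ℝ} {f : ℝ × ℝ → ℝ → ℝ} (hd : 0 < d) (hℓ : 0 < ℓ)
    (hf : ∀ x s θ, 0 < s → 0 < θ → θ < 1 → f x (θ * s) < θ * f x s)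
    {u₁ u₂ : ℝ × ℝ → ℝ}
    (h₁pos : ∀ x, 0 < u₁ x) (h₁per : IsPer ℓ u₁) (h₁reg : ContDiff ℝ 2 u₁)
    (h₁eq : ∀ x, d * lap u₁ x = f x (u₁ x))
    (h₂pos : ∀ x, 0 < u₂ x) (h₂per : IsPer ℓ u₂) (h₂reg : ContDiff ℝ 2 u₂)
    (h₂eq : ∀ x, d * lap u₂ x = f x (u₂ x)) (x : ℝ × ℝ) : u₁ x ≤ u₂ x := by
  obtain ⟨x₀, hmin⟩ := (h₂per.div h₁per).exists_forall_le hℓ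
    (h₂reg.continuous.div h₁reg.continuous fun x => (h₁pos x).ne')
  set θ := u₂ x₀ / u₁ x₀
  have hθ₀ : 0 < θ := div_pos (h₂pos x₀) (h₁pos x₀)
  have hθu (x : ℝ × ℝ) : θ * u₁ x ≤ u₂ x := (le_div_iff₀ (h₁pos x)).1 (hmin x)
  have hθx₀ : θ * u₁ x₀ = u₂ x₀ := div_mul_cancel₀ _ (h₁pos x₀).ne'
  suffices 1 ≤ θ by nlinarith [hθu x, h₁pos x]
  by_contra! hθ₁
  have hw : IsLocalMin (fun x => u₂ x - θ * u₁ x) x₀ :=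
    Eventually.of_forall fun x => by linarith [hθu x]
  have hlap := lap_nonneg_of_isLocalMin hw
    (h₂reg.continuous.sub (h₁reg.continuous.const_mul θ)).continuousAt
  rw [lap_sub_const_mul h₂reg h₁reg] at hlap
  have hlt := hf x₀ (u₁ x₀) θ (h₁pos x₀) hθ₀ hθ₁
  rw [hθx₀, ← h₂eq, ← h₁eq] at hlt
  nlinarith

/-- The steady-state virus equation reads `d_V ΔV = virusReaction γ μT μV R₀ x V`. -/
noncomputable def virusReaction (γ μT μV : ℝ) (R₀ : ℝ × ℝ → ℝ) (x : ℝ × ℝ) (s : ℝ) : ℝ :=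
  μV * s - μT * μV * R₀ x * s / (γ * s + μT)

theorem virusReaction_mul_lt {γ μT μV : ℝ} {R₀ : ℝ × ℝ → ℝ} {x : ℝ × ℝ} {s θ : ℝ}
    (hγ : 0 < γ) (hμT : 0 < μT) (hμV : 0 < μV) (hR₀ : 0 < R₀ x) (hs : 0 < s) (hθ₀ : 0 < θ)
    (hθ₁ : θ < 1) :
    virusReaction γ μT μV R₀ x (θ * s) < θ * virusReaction γ μT μV R₀ x s := by
  have hsat : μT * μV * R₀ x * (θ * s) / (γ * s + μT) <
      μT * μV * R₀ x * (θ * s) / (γ * (θ * s) + μT) :=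
    div_lt_div_of_pos_left (by positivity) (by positivity) (by nlinarith [mul_pos hγ hs])
  have : θ * (μT * μV * R₀ x * s / (γ * s + μT)) = μT * μV * R₀ x * (θ * s) / (γ * s + μT) := by
    ring
  simp only [virusReaction]
  linarith

theorem stmt_4_general (dV γ μT μV ℓ : ℝ)
    (hdV : 0 < dV) (hγ : 0 < γ) (hμT : 0 < μT) (hμV : 0 < μV) (hℓ : 0 < ℓ)
    (R₀ : ℝ × ℝ → ℝ)
    (hR₀pos : ∀ x, 0 < R₀ x)
    (V₁ V₂ : ℝ × ℝ → ℝ)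
    (hV₁nonneg : ∀ x, 0 ≤ V₁ x) (hV₁per : IsPer ℓ V₁)
    (hV₁reg : ContDiff ℝ 2 V₁)
    (hV₁eq : ∀ x, dV * lap V₁ x - μV * V₁ x +
      μT * μV * R₀ x * V₁ x / (γ * V₁ x + μT) = 0)
    (hV₁ne : ¬ ∀ x, V₁ x = 0)
    (hV₂nonneg : ∀ x, 0 ≤ V₂ x) (hV₂per : IsPer ℓ V₂)
    (hV₂reg : ContDiff ℝ 2 V₂)
    (hV₂eq : ∀ x, dV * lap V₂ x - μV * V₂ x +
      μT * μV * R₀ x * V₂ x / (γ * V₂ x + μT) = 0)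
    (hV₂ne : ¬ ∀ x, V₂ x = 0) :
    V₁ = V₂ := by
  have hreact {V : ℝ × ℝ → ℝ}
      (hV : ∀ x, dV * lap V x - μV * V x + μT * μV * R₀ x * V x / (γ * V x + μT) = 0)
      (x : ℝ × ℝ) : dV * lap V x = virusReaction γ μT μV R₀ x (V x) := by
    simp only [virusReaction]; linarith [hV x]
  have hlap {V : ℝ × ℝ → ℝ} (hnn : ∀ x, 0 ≤ V x)
      (hV : ∀ x, dV * lap V x - μV * V x + μT * μV * R₀ x * V x / (γ * V x + μT) = 0)
      (x : ℝ × ℝ) : lap V x ≤ μV / dV * V x := by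
    have := hnn x
    have := hR₀pos x
    have : 0 ≤ μT * μV * R₀ x * V x / (γ * V x + μT) := by positivity
    rw [div_mul_eq_mul_div, le_div_iff₀ hdV]
    linarith [hV x]
  have hpos₁ := pos_of_lap_le_mul hV₁reg (by positivity) hV₁nonneg hV₁ne (hlap hV₁nonneg hV₁eq)
  have hpos₂ := pos_of_lap_le_mul hV₂reg (by positivity) hV₂nonneg hV₂ne (hlap hV₂nonneg hV₂eq)
  have hsub (x : ℝ × ℝ) (s θ : ℝ) (hs : 0 < s) (hθ₀ : 0 < θ) (hθ₁ : θ < 1) :=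
    virusReaction_mul_lt hγ hμT hμV (hR₀pos x) hs hθ₀ hθ₁
  funext x
  exact le_antisymm
    (le_of_lap_eq_of_isPer hdV hℓ hsub hpos₁ hV₁per hV₁reg (hreact hV₁eq)
      hpos₂ hV₂per hV₂reg (hreact hV₂eq) x)
    (le_of_lap_eq_of_isPer hdV hℓ hsub hpos₂ hV₂per hV₂reg (hreact hV₂eq)
      hpos₁ hV₁per hV₁reg (hreact hV₁eq) x)

/-- the steady-state virus equation has at most one nontrivial
nonnegative periodic classical solution. -/
theorem stmt_4 (dV γ μT μV ℓ : ℝ)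
    (hdV : 0 < dV) (hγ : 0 < γ) (hμT : 0 < μT) (hμV : 0 < μV) (hℓ : 0 < ℓ)
    (R₀ : ℝ × ℝ → ℝ) (hR₀cont : Continuous R₀) (hR₀per : IsPer ℓ R₀)
    (hR₀pos : ∀ x, 0 < R₀ x)
    (V₁ V₂ : ℝ × ℝ → ℝ)
    (hV₁nonneg : ∀ x, 0 ≤ V₁ x) (hV₁per : IsPer ℓ V₁)
    (hV₁reg : ContDiff ℝ 2 V₁)
    (hV₁eq : ∀ x, dV * lap V₁ x - μV * V₁ x +
      μT * μV * R₀ x * V₁ x / (γ * V₁ x + μT) = 0)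
    (hV₁ne : ¬ ∀ x, V₁ x = 0)
    (hV₂nonneg : ∀ x, 0 ≤ V₂ x) (hV₂per : IsPer ℓ V₂)
    (hV₂reg : ContDiff ℝ 2 V₂)
    (hV₂eq : ∀ x, dV * lap V₂ x - μV * V₂ x +
      μT * μV * R₀ x * V₂ x / (γ * V₂ x + μT) = 0)
    (hV₂ne : ¬ ∀ x, V₂ x = 0) :
    V₁ = V₂ :=
  stmt_4_general dV γ μT μV ℓ hdV hγ hμT hμV hℓ R₀ hR₀pos V₁ V₂ hV₁nonneg hV₁per hV₁reg hV₁eq hV₁ne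
    hV₂nonneg hV₂per hV₂reg hV₂eq hV₂ne
end

section
/- Let μ_T, μ_I, μ_V, N, d_V be positive real numbers, R₀ > 1 a real number, and λ_k ≥ 0 a real number. Consider the real 3×3 matrix M_k = [[−μ_T R₀, 0, −μ_V/N], [μ_T(R₀ − 1), −μ_I, μ_V/N], [0, N μ_I, −λ_k d_V − μ_V]]. Then every complex eigenvalue of M_k has negative real part. -/
/-!
Expanding `det (z - M_k)` gives the characteristic polynomial `z³ + a z² + b z + c` with
`a = -tr M_k`, `b` the sum of the principal 2×2 minors and `c = -det M_k`. By the Routh–Hurwitz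
criterion for cubics it suffices that `a > 0`, `c > 0` and `a b > c`. For `M_k`, `a` and `a b - c`
expand into sums of positive monomials, and `c = μ_T μ_I (R₀ λ_k d_V + (R₀ - 1) μ_V) > 0` as `R₀ > 1`.
-/

open Matrix

theorem Complex.re_neg_of_cubic_eq_zero {a b c : ℝ} (ha : 0 < a) (hc : 0 < c) (habc : c < a * b)
    {z : ℂ} (hz : z ^ 3 + a * z ^ 2 + b * z + c = 0) : z.re < 0 := by
  obtain ⟨hre, him⟩ := Complex.ext_iff.mp hz
  simp only [Complex.add_re, Complex.add_im, Complex.mul_re, Complex.mul_im, Complex.ofReal_re,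
    Complex.ofReal_im, Complex.zero_re, Complex.zero_im, pow_succ, pow_zero, one_mul] at hre him
  have hb : 0 < b := pos_of_mul_pos_right (hc.trans habc) ha.le
  by_contra! hx
  generalize z.re = x at hre him hx
  generalize z.im = y at hre him
  rcases eq_or_ne y 0 with rfl | hy
  · simp only [mul_zero, sub_zero, zero_mul, add_zero] at hre
    nlinarith [pow_nonneg hx 3, mul_nonneg ha.le (sq_nonneg x), mul_nonneg hb.le hx]
  · have hy2 : y ^ 2 = 3 * x ^ 2 + 2 * a * x + b := by
      have := (mul_eq_zero.mp (show y * (3 * x ^ 2 - y ^ 2 + 2 * a * x + b) = 0 by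
        linear_combination him)).resolve_left hy
      linarith
    -- eliminating `y` leaves a cubic in `x` whose coefficients are all positive
    have hcubic : 8 * x ^ 3 + 8 * a * x ^ 2 + (2 * b + 2 * a ^ 2) * x + (a * b - c) = 0 := by
      linear_combination -hre + (-(3 * x) - a) * hy2
    nlinarith [pow_nonneg hx 3, mul_nonneg ha.le (sq_nonneg x), mul_nonneg hb.le hx,
      mul_nonneg (sq_nonneg a) hx]

namespace Matrix

variable {R : Type*} [CommRing R]

def sumPrincipalMinorsTwo (A : Matrix (Fin 3) (Fin 3) R) : R :=
  A 0 0 * A 1 1 - A 0 1 * A 1 0 + (A 0 0 * A 2 2 - A 0 2 * A 2 0) +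
    (A 1 1 * A 2 2 - A 1 2 * A 2 1)

theorem sumPrincipalMinorsTwo_map {S : Type*} [CommRing S] (f : R →+* S)
    (A : Matrix (Fin 3) (Fin 3) R) :
    (A.map f).sumPrincipalMinorsTwo = f A.sumPrincipalMinorsTwo := by
  simp [sumPrincipalMinorsTwo]

theorem det_scalar_sub_fin_three (A : Matrix (Fin 3) (Fin 3) R) (z : R) :
    (scalar (Fin 3) z - A).det =
      z ^ 3 - A.trace * z ^ 2 + A.sumPrincipalMinorsTwo * z - A.det := by
  simp [det_fin_three, trace_fin_three, sumPrincipalMinorsTwo, scalar_apply]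
  ring

theorem re_neg_of_mem_spectrum_fin_three (A : Matrix (Fin 3) (Fin 3) ℝ) (htr : A.trace < 0)
    (hdet : A.det < 0) (h : A.trace * A.sumPrincipalMinorsTwo < A.det) :
    ∀ z ∈ spectrum ℂ (A.map (algebraMap ℝ ℂ)), z.re < 0 := by
  intro z hz
  rw [mem_spectrum_iff_isRoot_charpoly, Polynomial.IsRoot, eval_charpoly,
    det_scalar_sub_fin_three, ← AddMonoidHom.map_trace, sumPrincipalMinorsTwo_map,
    ← RingHom.mapMatrix_apply, ← RingHom.map_det, Complex.coe_algebraMap] at hz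
  refine Complex.re_neg_of_cubic_eq_zero (a := -A.trace) (b := A.sumPrincipalMinorsTwo)
    (c := -A.det) (by linarith) (by linarith) (by linarith) ?_
  push_cast
  linear_combination hz

end Matrix

/-- for `R₀ > 1` and `λ_k ≥ 0` every complex eigenvalue of the
Fourier-mode matrix `M_k` has negative real part. -/
theorem stmt_11 (R₀ μT μI μV N dV lamk : ℝ)
    (hμT : 0 < μT) (hμI : 0 < μI) (hμV : 0 < μV) (hN : 0 < N)
    (hdV : 0 < dV) (hR₀ : 1 < R₀) (hlamk : 0 ≤ lamk)
    (Mk : Matrix (Fin 3) (Fin 3) ℝ)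
    (hMk : Mk = !![-μT * R₀, 0, -μV / N;
                   μT * (R₀ - 1), -μI, μV / N;
                   0, N * μI, -lamk * dV - μV]) :
    ∀ z ∈ spectrum ℂ (Mk.map (algebraMap ℝ ℂ)), z.re < 0 := by
  have hR₀pos : 0 < R₀ := by linarith
  have hs : 0 ≤ lamk * dV := mul_nonneg hlamk hdV.le
  have htr : Mk.trace = -(μT * R₀ + μI + (lamk * dV + μV)) := by
    simp [hMk, trace_fin_three]; ring
  have hminors : Mk.sumPrincipalMinorsTwo =
      μT * R₀ * μI + μT * R₀ * (lamk * dV + μV) + μI * (lamk * dV) := by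
    simp [hMk, sumPrincipalMinorsTwo]; field_simp; ring
  have hdet : Mk.det = -(μT * R₀ * μI * (lamk * dV + μV) - μT * μI * μV) := by
    simp [hMk, det_fin_three]; field_simp; ring
  apply re_neg_of_mem_spectrum_fin_three
  · rw [htr, neg_lt_zero]; positivity
  · rw [hdet, neg_lt_zero, sub_pos]
    nlinarith [mul_nonneg (mul_pos (mul_pos hμT hR₀pos) hμI).le hs, mul_pos (mul_pos hμT hμI) hμV]
  · rw [htr, hminors, hdet, ← sub_pos]
    ring_nf
    positivity
end

section
/- Fix positive reals d_V, γ, μ_T, μ_V and ℓ > 0, and let m > 1 be a real constant. Then the nonnegative, ℓ-periodic, twice continuously differentiable solutions V : ℝ² → ℝ of d_V ΔV − μ_V V + μ_T μ_V m V/(γV + μ_T) = 0 on ℝ² are exactly the two constant functions V ≡ 0 and V ≡ μ_T(m − 1)/γ. If instead 0 < m ≤ 1, the only nonnegative ℓ-periodic twice continuously differentiable solution is V ≡ 0. -/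
open MeasureTheory Set Filter Topology Function

/-!
Write `K = μT (m - 1) / γ`. Clearing the denominator `γ V + μT > 0` shows that `ΔV` is a positive
multiple of `V (V - K)`. At a maximum point of the periodic function `V` we have `ΔV ≤ 0`, so the
maximum is `0` or at most `K`; either way `V (V - K) ≤ 0` everywhere, i.e. `ΔV ≤ 0`. Since `ΔV`
integrates to zero over a period cell, it vanishes identically, so `V` takes only the values `0`
and `K`, and by connectedness it is one of the two constants. For `m ≤ 1` we have `K ≤ 0`, which
leaves only `V ≡ 0`.
-/

theorem IsLocalMax.deriv_deriv_nonpos {f : ℝ → ℝ} {a : ℝ} (hmax : IsLocalMax f a)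
    (hf : Differentiable ℝ f) : deriv (deriv f) a ≤ 0 := by
  by_contra! hpos
  have hsign := eventually_nhdsWithin_sign_eq_of_deriv_pos hpos hmax.deriv_eq_zero
  have hincr : ∀ᶠ x in 𝓝[>] a, 0 < deriv f x :=
    deriv_pos_right_of_sign_deriv (nhdsWithin_le_nhds hsign)
  obtain ⟨b, hab, hsub⟩ := mem_nhdsGT_iff_exists_Ioo_subset.mp
    (hincr.and (hmax.filter_mono nhdsWithin_le_nhds))
  obtain ⟨c, hac, hcb⟩ := exists_between (mem_Ioi.mp hab)
  have hmono : StrictMonoOn f (Icc a c) :=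
    strictMonoOn_of_deriv_pos (convex_Icc a c) hf.continuous.continuousOn fun x hx =>
      (hsub (Ioo_subset_Ioo_right hcb.le (by simpa using hx))).1
  exact (hmono ⟨le_rfl, hac.le⟩ ⟨hac.le, le_rfl⟩ hac).not_ge (hsub ⟨hac, hcb⟩).2

theorem Function.Periodic.intervalIntegral_deriv_deriv_eq_zero {g : ℝ → ℝ} {ℓ : ℝ}
    (hper : Periodic g ℓ) (hg : ContDiff ℝ 2 g) (a : ℝ) :
    ∫ t in a..a + ℓ, deriv (deriv g) t = 0 := by
  have hg' : ContDiff ℝ 1 (deriv g) := hg.iterate_deriv' 1 1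
  rw [intervalIntegral.integral_deriv_eq_sub (fun t _ => hg'.differentiable one_ne_zero t)
    ((hg'.continuous_deriv le_rfl).intervalIntegrable _ _), sub_eq_zero,
    ← deriv_comp_add_const, funext hper]

theorem setIntegral_Icc_eq_intervalIntegral {f : ℝ → ℝ} {a b : ℝ} (hab : a ≤ b) :
    ∫ t in Icc a b, f t = ∫ t in a..b, f t := by
  rw [integral_Icc_eq_integral_Ioc, intervalIntegral.integral_of_le hab]

theorem Continuous.eqOn_zero_of_setIntegral_eq_zero {X : Type*} [TopologicalSpace X]
    [MeasurableSpace X] {μ : Measure X} [μ.IsOpenPosMeasure] {f : X → ℝ} {s U : Set X}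
    (hf : Continuous f) (hnn : 0 ≤ f) (hint : IntegrableOn f s μ) (h0 : ∫ x in s, f x ∂μ = 0)
    (hU : IsOpen U) (hUs : U ⊆ s) : EqOn f 0 U :=
  Measure.eqOn_open_of_ae_eq (ae_restrict_of_ae_restrict_of_subset hUs
    ((integral_eq_zero_iff_of_nonneg hnn hint).mp h0)) hU hf.continuousOn continuousOn_const

section Slices

variable {F : Type*} [NormedAddCommGroup F] [NormedSpace ℝ F] {W : ℝ × ℝ → F}

theorem deriv_slice_fst (hW : Differentiable ℝ W) (y : ℝ) :
    deriv (fun t => W (t, y)) = fun t => fderiv ℝ W (t, y) (1, 0) :=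
  funext fun t => ((hW (t, y)).hasFDerivAt.comp_hasDerivAt t
    ((hasDerivAt_id t).prodMk (hasDerivAt_const t y))).deriv

theorem deriv_slice_snd (hW : Differentiable ℝ W) (x : ℝ) :
    deriv (fun t => W (x, t)) = fun t => fderiv ℝ W (x, t) (0, 1) :=
  funext fun t => ((hW (x, t)).hasFDerivAt.comp_hasDerivAt t
    ((hasDerivAt_const t x).prodMk (hasDerivAt_id t))).deriv

theorem continuous_deriv_deriv_slice_fst (hW : ContDiff ℝ 2 W) :
    Continuous fun p : ℝ × ℝ => deriv (deriv fun t => W (t, p.2)) p.1 := by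
  have hW₁ : ContDiff ℝ 1 fun p => fderiv ℝ W p (1, 0) :=
    (hW.fderiv_right (by norm_num)).clm_apply contDiff_const
  simp_rw [deriv_slice_fst (hW.differentiable (by norm_num)),
    deriv_slice_fst (hW₁.differentiable one_ne_zero)]
  exact (hW₁.continuous_fderiv one_ne_zero).clm_apply continuous_const

theorem continuous_deriv_deriv_slice_snd (hW : ContDiff ℝ 2 W) :
    Continuous fun p : ℝ × ℝ => deriv (deriv fun t => W (p.1, t)) p.2 := by
  have hW₂ : ContDiff ℝ 1 fun p => fderiv ℝ W p (0, 1) :=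
    (hW.fderiv_right (by norm_num)).clm_apply contDiff_const
  simp_rw [deriv_slice_snd (hW.differentiable (by norm_num)),
    deriv_slice_snd (hW₂.differentiable one_ne_zero)]
  exact (hW₂.continuous_fderiv one_ne_zero).clm_apply continuous_const

end Slices

section Laplacian

variable {ℓ : ℝ} {V : ℝ × ℝ → ℝ}

theorem IsPer.periodic_fst (hper : IsPer ℓ V) (y : ℝ) : Periodic (fun t => V (t, y)) ℓ :=
  fun t => (hper (t, y)).1

theorem IsPer.periodic_snd (hper : IsPer ℓ V) (x : ℝ) : Periodic (fun t => V (x, t)) ℓ :=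
  fun t => (hper (x, t)).2

theorem IsPer.exists_forall_le_s13 (hper : IsPer ℓ V) (hℓ : 0 < ℓ) (hV : Continuous V) :
    ∃ x₀, ∀ x, V x ≤ V x₀ := by
  obtain ⟨x₀, -, hx₀⟩ := (isCompact_Icc.prod isCompact_Icc).exists_isMaxOn
    ((nonempty_Icc.mpr hℓ.le).prod (nonempty_Icc.mpr hℓ.le)) hV.continuousOn
  refine ⟨x₀, fun ⟨x, y⟩ => ?_⟩
  obtain ⟨y', hy', hyy'⟩ := (hper.periodic_snd x).exists_mem_Ico₀ hℓ y
  obtain ⟨x', hx', hxx'⟩ := (hper.periodic_fst y').exists_mem_Ico₀ hℓ x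
  calc V (x, y) = V (x', y') := hyy'.trans hxx'
    _ ≤ V x₀ := hx₀ ⟨Ico_subset_Icc_self hx', Ico_subset_Icc_self hy'⟩

theorem ContDiff.continuous_lap (hV : ContDiff ℝ 2 V) : Continuous (lap V) :=
  (continuous_deriv_deriv_slice_fst hV).add (continuous_deriv_deriv_slice_snd hV)

theorem IsLocalMax.lap_nonpos {x₀ : ℝ × ℝ} (hmax : IsLocalMax V x₀) (hV : ContDiff ℝ 2 V) :
    lap V x₀ ≤ 0 := by
  have hVd : Differentiable ℝ V := hV.differentiable (by norm_num)
  have h₁ : IsLocalMax (fun t => V (t, x₀.2)) x₀.1 :=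
    hmax.comp_continuous (continuous_id.prodMk continuous_const).continuousAt
  have h₂ : IsLocalMax (fun t => V (x₀.1, t)) x₀.2 :=
    hmax.comp_continuous (continuous_const.prodMk continuous_id).continuousAt
  exact add_nonpos
    (h₁.deriv_deriv_nonpos (hVd.comp (differentiable_id.prodMk (differentiable_const _))))
    (h₂.deriv_deriv_nonpos (hVd.comp ((differentiable_const _).prodMk differentiable_id)))

theorem IsPer.setIntegral_lap_eq_zero (hper : IsPer ℓ V) (hℓ : 0 ≤ ℓ) (hV : ContDiff ℝ 2 V)
    (a b : ℝ) : ∫ x in Icc a (a + ℓ) ×ˢ Icc b (b + ℓ), lap V x = 0 := by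
  have h₁ := continuous_deriv_deriv_slice_fst hV
  have h₂ := continuous_deriv_deriv_slice_snd hV
  have hcell : IsCompact (Icc a (a + ℓ) ×ˢ Icc b (b + ℓ)) := isCompact_Icc.prod isCompact_Icc
  have hfst : ∀ y, ∫ x in Icc a (a + ℓ), deriv (deriv fun t => V (t, y)) x = 0 := fun y => by
    rw [setIntegral_Icc_eq_intervalIntegral (by linarith)]
    exact (hper.periodic_fst y).intervalIntegral_deriv_deriv_eq_zero
      (hV.comp (contDiff_id.prodMk contDiff_const)) a
  have hsnd : ∀ x, ∫ y in Icc b (b + ℓ), deriv (deriv fun t => V (x, t)) y = 0 := fun x => by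
    rw [setIntegral_Icc_eq_intervalIntegral (by linarith)]
    exact (hper.periodic_snd x).intervalIntegral_deriv_deriv_eq_zero
      (hV.comp (contDiff_const.prodMk contDiff_id)) b
  have hswap : IntegrableOn (fun z : ℝ × ℝ => deriv (deriv fun t => V (t, z.swap.2)) z.swap.1)
      (Icc b (b + ℓ) ×ˢ Icc a (a + ℓ)) :=
    (h₁.comp continuous_swap).continuousOn.integrableOn_compact (isCompact_Icc.prod isCompact_Icc)
  unfold lap
  rw [integral_add (h₁.continuousOn.integrableOn_compact hcell)
      (h₂.continuousOn.integrableOn_compact hcell), Measure.volume_eq_prod,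
    ← setIntegral_prod_swap, setIntegral_prod _ hswap,
    setIntegral_prod _ (h₂.continuousOn.integrableOn_compact hcell)]
  simp [hfst, hsnd]

theorem IsPer.lap_eq_zero_of_lap_nonpos (hper : IsPer ℓ V) (hℓ : 0 < ℓ) (hV : ContDiff ℝ 2 V)
    (hlap : ∀ x, lap V x ≤ 0) (x : ℝ × ℝ) : lap V x = 0 := by
  set a := x.1 - ℓ / 2 with ha
  set b := x.2 - ℓ / 2 with hb
  have hcell : IsCompact (Icc a (a + ℓ) ×ˢ Icc b (b + ℓ)) := isCompact_Icc.prod isCompact_Icc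
  have hx : x ∈ Ioo a (a + ℓ) ×ˢ Ioo b (b + ℓ) := by
    refine ⟨⟨?_, ?_⟩, ?_, ?_⟩ <;> linarith [ha, hb]
  have h := hV.continuous_lap.neg.eqOn_zero_of_setIntegral_eq_zero (μ := volume)
    (fun y => neg_nonneg.mpr (hlap y))
    (hV.continuous_lap.neg.continuousOn.integrableOn_compact hcell)
    (by rw [integral_neg', hper.setIntegral_lap_eq_zero hℓ.le hV, neg_zero])
    (isOpen_Ioo.prod isOpen_Ioo) (prod_mono Ioo_subset_Icc_self Ioo_subset_Icc_self) hx
  simpa using h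

end Laplacian

theorem virus_steady_state_iff {dV γ μT μV m v L : ℝ} (hdV : dV ≠ 0) (hγ : γ ≠ 0)
    (hden : γ * v + μT ≠ 0) :
    dV * L - μV * v + μT * μV * m * v / (γ * v + μT) = 0 ↔
      L = μV * γ / (dV * (γ * v + μT)) * (v * (v - μT * (m - 1) / γ)) := by
  have key : dV * L - μV * v + μT * μV * m * v / (γ * v + μT) =
      dV * (L - μV * γ / (dV * (γ * v + μT)) * (v * (v - μT * (m - 1) / γ))) := by
    rw [mul_comm γ v] at hden ⊢
    field_simp
    ring
  rw [key, mul_eq_zero, sub_eq_zero, or_iff_right hdV]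

def IsNonnegPeriodicSteadyState (dV γ μT μV ℓ m : ℝ) (V : ℝ × ℝ → ℝ) : Prop :=
  ContDiff ℝ 2 V ∧ IsPer ℓ V ∧ (∀ x, 0 ≤ V x) ∧
    ∀ x, dV * lap V x - μV * V x + μT * μV * m * V x / (γ * V x + μT) = 0

section SteadyState

variable {dV γ μT μV ℓ m : ℝ}

theorem isNonnegPeriodicSteadyState_const {c : ℝ} (hdV : dV ≠ 0) (hγ : 0 < γ) (hμT : 0 < μT)
    (hc : 0 ≤ c) (hcK : c * (c - μT * (m - 1) / γ) = 0) :
    IsNonnegPeriodicSteadyState dV γ μT μV ℓ m fun _ => c := by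
  have hden : γ * c + μT ≠ 0 := (add_pos_of_nonneg_of_pos (mul_nonneg hγ.le hc) hμT).ne'
  refine ⟨contDiff_const, fun _ => ⟨rfl, rfl⟩, fun _ => hc, fun _ => ?_⟩
  rw [virus_steady_state_iff hdV hγ.ne' hden, hcK, mul_zero]
  simp [lap]

theorem IsNonnegPeriodicSteadyState.eq_zero_or_eq_const {V : ℝ × ℝ → ℝ}
    (h : IsNonnegPeriodicSteadyState dV γ μT μV ℓ m V) (hdV : 0 < dV) (hγ : 0 < γ)
    (hμT : 0 < μT) (hμV : 0 < μV) (hℓ : 0 < ℓ) :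
    V = (fun _ => 0) ∨ V = fun _ => μT * (m - 1) / γ := by
  obtain ⟨hV, hper, hnn, hsol⟩ := h
  set K := μT * (m - 1) / γ
  have hden : ∀ x, 0 < γ * V x + μT := fun x =>
    add_pos_of_nonneg_of_pos (mul_nonneg hγ.le (hnn x)) hμT
  have hcoef : ∀ x, 0 < μV * γ / (dV * (γ * V x + μT)) := fun x => by
    have := hden x
    positivity
  have hlap : ∀ x, lap V x = μV * γ / (dV * (γ * V x + μT)) * (V x * (V x - K)) := fun x =>
    (virus_steady_state_iff hdV.ne' hγ.ne' (hden x).ne').mp (hsol x)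
  obtain ⟨x₀, hx₀⟩ := hper.exists_forall_le_s13 hℓ hV.continuous
  have hmax : V x₀ * (V x₀ - K) ≤ 0 := nonpos_of_mul_nonpos_right
    ((hlap x₀).symm.trans_le (IsLocalMax.lap_nonpos (Eventually.of_forall hx₀) hV)) (hcoef x₀)
  have hsign : ∀ x, V x * (V x - K) ≤ 0 := fun x => by
    rcases le_or_gt (V x₀) K with hle | hlt
    · exact mul_nonpos_of_nonneg_of_nonpos (hnn x) (by linarith [hx₀ x])
    · have hx : V x = 0 :=
        le_antisymm ((hx₀ x).trans (nonpos_of_mul_nonpos_left hmax (sub_pos.mpr hlt))) (hnn x)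
      simp [hx]
  have hharm : ∀ x, lap V x = 0 := hper.lap_eq_zero_of_lap_nonpos hℓ hV fun x =>
    (hlap x).trans_le (mul_nonpos_of_nonneg_of_nonpos (hcoef x).le (hsign x))
  have hval : ∀ x, V x ∈ ({0, K} : Set ℝ) := fun x => by
    have := (mul_eq_zero.mp ((hlap x).symm.trans (hharm x))).resolve_left (hcoef x).ne'
    rcases mul_eq_zero.mp this with h0 | hK
    exacts [Or.inl h0, Or.inr (sub_eq_zero.mp hK)]
  obtain ⟨c, hc, hVc⟩ := isPreconnected_univ.eqOn_const_of_mapsTo (toFinite _).isDiscrete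
    hV.continuous.continuousOn (fun x _ => hval x) (insert_nonempty _ _)
  have hVeq : V = fun _ => c := funext fun x => hVc (mem_univ x)
  rcases hc with rfl | rfl
  exacts [Or.inl hVeq, Or.inr hVeq]

end SteadyState

/-- for a constant reproductive ratio `m`, the nonnegative
periodic classical solutions of the steady-state virus equation are exactly
`V ≡ 0` and `V ≡ μ_T(m-1)/γ` if `m > 1`, and only `V ≡ 0` if `0 < m ≤ 1`. -/
theorem stmt_13 (dV γ μT μV ℓ m : ℝ)
    (hdV : 0 < dV) (hγ : 0 < γ) (hμT : 0 < μT) (hμV : 0 < μV) (hℓ : 0 < ℓ) :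
    (1 < m →
      ∀ V : ℝ × ℝ → ℝ,
        (ContDiff ℝ 2 V ∧ IsPer ℓ V ∧ (∀ x, 0 ≤ V x) ∧
          (∀ x, dV * lap V x - μV * V x +
            μT * μV * m * V x / (γ * V x + μT) = 0)) ↔
        (V = fun _ => 0) ∨ (V = fun _ => μT * (m - 1) / γ)) ∧
    (0 < m → m ≤ 1 →
      ∀ V : ℝ × ℝ → ℝ,
        (ContDiff ℝ 2 V ∧ IsPer ℓ V ∧ (∀ x, 0 ≤ V x) ∧
          (∀ x, dV * lap V x - μV * V x +
            μT * μV * m * V x / (γ * V x + μT) = 0)) ↔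
        V = fun _ => 0) := by
  have hzero : IsNonnegPeriodicSteadyState dV γ μT μV ℓ m fun _ => 0 :=
    isNonnegPeriodicSteadyState_const hdV.ne' hγ hμT le_rfl (zero_mul _)
  have classify : ∀ V, IsNonnegPeriodicSteadyState dV γ μT μV ℓ m V →
      V = (fun _ => 0) ∨ V = fun _ => μT * (m - 1) / γ := fun _ h =>
    h.eq_zero_or_eq_const hdV hγ hμT hμV hℓ
  refine ⟨fun hm V => ⟨classify V, ?_⟩, fun _ hm V => ⟨fun h => ?_, fun hV => hV ▸ hzero⟩⟩
  · rintro (rfl | rfl)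
    · exact hzero
    · exact isNonnegPeriodicSteadyState_const hdV.ne' hγ hμT
        (div_nonneg (mul_nonneg hμT.le (by linarith)) hγ.le) (by rw [sub_self, mul_zero])
  · rcases classify V h with hV | rfl
    · exact hV
    · have hK : μT * (m - 1) / γ = 0 := le_antisymm
        (div_nonpos_of_nonpos_of_nonneg (mul_nonpos_of_nonneg_of_nonpos hμT.le (by linarith))
          hγ.le) (h.2.2.1 0)
      simp only [hK]
end
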